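/- Let A be a unital C*-algebra, let X and Y be Banach right A-modules, and let T : X → Y be a continuous linear map. Then α(T) = β(T), where α(T) = sup{‖e⊥Te‖ : e ∈ A projection} and β(T) = sup{‖eTf‖ : e, f ∈ A projections with ef = 0}. -/
import Mathlib


/-- A contractive Banach right module over a (possibly non-unital) C*-algebra `A`:
the action `(x, a) ↦ x·a` is a continuous bilinear map `X × A → X` satisfying
`(x·a)·b = x·(a*b)` and `‖x·a‖ ≤ ‖x‖·‖a‖`. -/
structure BanachRightModule (A X : Type*) [NonUnitalCStarAlgebra A]
    [NormedAddCommGroup X] [NormedSpace ℂ X] where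
  act : X →L[ℂ] A →L[ℂ] X
  act_mul : ∀ (x : X) (a b : A), act (act x a) b = act x (a * b)
  norm_act_le : ∀ (x : X) (a : A), ‖act x a‖ ≤ ‖x‖ * ‖a‖

section Defs

variable {A X Y : Type*} [NonUnitalCStarAlgebra A]
  [NormedAddCommGroup X] [NormedSpace ℂ X]
  [NormedAddCommGroup Y] [NormedSpace ℂ Y]

/-- A projection in a C*-algebra: a self-adjoint idempotent. -/
def IsProjection {A : Type*} [NonUnitalCStarAlgebra A] (e : A) : Prop :=
  IsSelfAdjoint e ∧ IsIdempotentElem e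

/-- The operator `aTb : x ↦ T(x·a)·b`. -/
noncomputable def sandwich (ρX : BanachRightModule A X) (ρY : BanachRightModule A Y)
    (T : X →L[ℂ] Y) (a b : A) : X →L[ℂ] Y :=
  ((ρY.act.flip b).comp T).comp (ρX.act.flip a)

/-- The set of continuous right `A`-module homomorphisms from `X` to `Y`. -/
def homSet (ρX : BanachRightModule A X) (ρY : BanachRightModule A Y) :
    Set (X →L[ℂ] Y) :=
  {Φ | ∀ (x : X) (a : A), Φ (ρX.act x a) = ρY.act (Φ x) a}

/-- `β(T) = sup{‖eTf‖ : e, f ∈ A projections with ef = 0}`. -/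
noncomputable def betaConst (ρX : BanachRightModule A X) (ρY : BanachRightModule A Y)
    (T : X →L[ℂ] Y) : ℝ :=
  sSup {r : ℝ | ∃ e f : A, IsProjection e ∧ IsProjection f ∧ e * f = 0 ∧
    r = ‖sandwich ρX ρY T e f‖}

/-- `γ(T) = sup{‖aTb‖ : a, b ∈ A positive contractions with ab = 0}`. -/
noncomputable def gammaConst [PartialOrder A] [StarOrderedRing A]
    (ρX : BanachRightModule A X) (ρY : BanachRightModule A Y)
    (T : X →L[ℂ] Y) : ℝ :=
  sSup {r : ℝ | ∃ a b : A, 0 ≤ a ∧ 0 ≤ b ∧ ‖a‖ ≤ 1 ∧ ‖b‖ ≤ 1 ∧ a * b = 0 ∧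
    r = ‖sandwich ρX ρY T a b‖}

/-- `δ(T) = sup_{‖x‖ ≤ 1} inf{‖T(x) − Φ(x)‖ : Φ ∈ Hom_A(X,Y)}`. -/
noncomputable def deltaConst (ρX : BanachRightModule A X) (ρY : BanachRightModule A Y)
    (T : X →L[ℂ] Y) : ℝ :=
  sSup {r : ℝ | ∃ x : X, ‖x‖ ≤ 1 ∧
    r = Metric.infDist (T x) ((fun Φ : X →L[ℂ] Y => Φ x) '' homSet ρX ρY)}

/-- `‖ad(T)‖ = sup{‖aT − Ta‖ : a ∈ A, ‖a‖ ≤ 1}`, where `(aT)(x) = T(x·a)` and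
`(Ta)(x) = T(x)·a`. -/
noncomputable def adNorm (ρX : BanachRightModule A X) (ρY : BanachRightModule A Y)
    (T : X →L[ℂ] Y) : ℝ :=
  sSup {r : ℝ | ∃ a : A, ‖a‖ ≤ 1 ∧
    r = ‖T.comp (ρX.act.flip a) - (ρY.act.flip a).comp T‖}

/-- The module `X` is essential: the linear span of `{x·a : x ∈ X, a ∈ A}` is dense. -/
def Essential (ρX : BanachRightModule A X) : Prop :=
  Dense (Submodule.span ℂ {z : X | ∃ (x : X) (a : A), z = ρX.act x a} : Set X)

end Defs

section Helpers

variable {A X Y : Type*} [NonUnitalCStarAlgebra A]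
  [NormedAddCommGroup X] [NormedSpace ℂ X]
  [NormedAddCommGroup Y] [NormedSpace ℂ Y]

lemma act_flip_norm_le (ρ : BanachRightModule A X) (a : A) :
    ‖ρ.act.flip a‖ ≤ ‖a‖ := by
  refine ContinuousLinearMap.opNorm_le_bound _ (norm_nonneg a) (fun x => ?_)
  simpa [mul_comm] using ρ.norm_act_le x a

lemma proj_norm_le {e : A} (he : IsProjection e) : ‖e‖ ≤ 1 := by
  have h : ‖e‖ * ‖e‖ = ‖e‖ := by
    have := CStarRing.norm_star_mul_self (x := e)
    rw [he.1.star_eq, he.2.eq] at this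
    linarith [this]
  nlinarith [norm_nonneg e]

lemma sandwich_norm_le (ρX : BanachRightModule A X) (ρY : BanachRightModule A Y)
    (T : X →L[ℂ] Y) {a b : A} (ha : ‖a‖ ≤ 1) (hb : ‖b‖ ≤ 1) :
    ‖sandwich ρX ρY T a b‖ ≤ ‖T‖ := by
  calc ‖sandwich ρX ρY T a b‖ ≤ ‖(ρY.act.flip b).comp T‖ * ‖ρX.act.flip a‖ :=
        ContinuousLinearMap.opNorm_comp_le _ _
    _ ≤ ‖ρY.act.flip b‖ * ‖T‖ * ‖ρX.act.flip a‖ := by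
        gcongr; exact ContinuousLinearMap.opNorm_comp_le _ _
    _ ≤ 1 * ‖T‖ * 1 := by
        gcongr
        · exact le_trans (act_flip_norm_le ρY b) hb
        · exact le_trans (act_flip_norm_le ρX a) ha
    _ = ‖T‖ := by ring

end Helpers

/-- `α(T) = sup{‖e⊥Te‖ : e ∈ A projection}`, where `(e⊥Te)(x) = T(x·(1−e))·e`. -/
noncomputable def alphaConst {A X Y : Type*} [CStarAlgebra A]
    [NormedAddCommGroup X] [NormedSpace ℂ X]
    [NormedAddCommGroup Y] [NormedSpace ℂ Y]
    (ρX : BanachRightModule A X) (ρY : BanachRightModule A Y)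
    (T : X →L[ℂ] Y) : ℝ :=
  sSup {r : ℝ | ∃ e : A, IsProjection e ∧ r = ‖sandwich ρX ρY T (1 - e) e‖}

/-- Let `A` be a unital C*-algebra, `X` and `Y` Banach right
`A`-modules, and `T : X → Y` a continuous linear map.  Then `α(T) = β(T)`. -/
theorem stmt8 {A X Y : Type*} [CStarAlgebra A]
    [NormedAddCommGroup X] [NormedSpace ℂ X] [CompleteSpace X]
    [NormedAddCommGroup Y] [NormedSpace ℂ Y] [CompleteSpace Y]
    (ρX : BanachRightModule A X) (ρY : BanachRightModule A Y) (T : X →L[ℂ] Y) :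
    alphaConst ρX ρY T = betaConst ρX ρY T := by
  have hP0 : IsProjection (0 : A) := ⟨by simp [IsSelfAdjoint], by simp [IsIdempotentElem]⟩
  have hcompl : ∀ e : A, IsProjection e → IsProjection (1 - e) := by
    intro e he
    refine ⟨?_, ?_⟩
    · have : star (1 - e) = 1 - e := by rw [star_sub, star_one, he.1.star_eq]
      exact this
    · show (1 - e) * (1 - e) = 1 - e
      rw [sub_mul, mul_sub, mul_sub, mul_one, one_mul, he.2.eq]
      abel_nf
      rw [mul_one]
  have hbddβ : BddAbove {r : ℝ | ∃ e f : A, IsProjection e ∧ IsProjection f ∧ e * f = 0 ∧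
      r = ‖sandwich ρX ρY T e f‖} := by
    refine ⟨‖T‖, fun r hr => ?_⟩
    obtain ⟨e, f, he, hf, -, rfl⟩ := hr
    exact sandwich_norm_le ρX ρY T (proj_norm_le he) (proj_norm_le hf)
  have hbddα : BddAbove {r : ℝ | ∃ e : A, IsProjection e ∧ r = ‖sandwich ρX ρY T (1 - e) e‖} := by
    refine ⟨‖T‖, fun r hr => ?_⟩
    obtain ⟨e, he, rfl⟩ := hr
    have h1e : IsProjection (1 - e) := hcompl e he
    exact sandwich_norm_le ρX ρY T (proj_norm_le h1e) (proj_norm_le he)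
  -- key: for orthogonal projections e f, ‖eTf‖ ≤ ‖(1-f)Tf‖
  apply le_antisymm
  · refine Real.sSup_le (fun r hr => ?_)
      (Real.sSup_nonneg (by rintro r ⟨e, f, -, -, -, rfl⟩; exact norm_nonneg _))
    obtain ⟨e, he, rfl⟩ := hr
    refine le_csSup hbddβ ⟨1 - e, e, hcompl e he, he, ?_, rfl⟩
    rw [sub_mul, one_mul, he.2.eq, sub_self]
  · refine Real.sSup_le (fun r hr => ?_)
      (Real.sSup_nonneg (by rintro r ⟨e, -, rfl⟩; exact norm_nonneg _))
    obtain ⟨e, f, he, hf, hef, rfl⟩ := hr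
    have h1f : IsProjection (1 - f) := hcompl f hf
    have key : ‖sandwich ρX ρY T e f‖ ≤ ‖sandwich ρX ρY T (1 - f) f‖ := by
      refine ContinuousLinearMap.opNorm_le_bound _ (norm_nonneg _) (fun x => ?_)
      have heq : sandwich ρX ρY T e f x = sandwich ρX ρY T (1 - f) f (ρX.act x e) := by
        simp only [sandwich, ContinuousLinearMap.comp_apply,
          ContinuousLinearMap.flip_apply]
        rw [ρX.act_mul]
        congr 2
        rw [mul_sub, mul_one, hef, sub_zero]
      rw [heq]
      calc ‖sandwich ρX ρY T (1 - f) f (ρX.act x e)‖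
          ≤ ‖sandwich ρX ρY T (1 - f) f‖ * ‖ρX.act x e‖ :=
            ContinuousLinearMap.le_opNorm _ _
        _ ≤ ‖sandwich ρX ρY T (1 - f) f‖ * (‖x‖ * ‖e‖) := by
            gcongr; exact ρX.norm_act_le x e
        _ ≤ ‖sandwich ρX ρY T (1 - f) f‖ * (‖x‖ * 1) := by
            gcongr
            exact proj_norm_le he
        _ = ‖sandwich ρX ρY T (1 - f) f‖ * ‖x‖ := by ring
    exact key.trans (le_csSup hbddα ⟨f, hf, rfl⟩)
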